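/- An n × m doubly stochastic array A is extremal if and only if its support supp A does not contain any cycle. -/

import Mathlib

/-- An `n × m` real matrix is a *doubly stochastic array* if its entries are
nonnegative, each column sums to `n` and each row sums to `m`. -/
def IsDSA (n m : ℕ) (A : Matrix (Fin n) (Fin m) ℝ) : Prop :=
  (∀ i j, 0 ≤ A i j) ∧ (∀ j, ∑ i, A i j = (n : ℝ)) ∧ (∀ i, ∑ j, A i j = (m : ℝ))

/-- An array `A ∈ S(n,m)` is *extremal* if it cannot be written as a convex
combination of two doubly stochastic arrays both different from `A`. -/
def IsExtremal (n m : ℕ) (A : Matrix (Fin n) (Fin m) ℝ) : Prop :=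
  IsDSA n m A ∧ ∀ (B C : Matrix (Fin n) (Fin m) ℝ) (t : ℝ),
    IsDSA n m B → IsDSA n m C → 0 < t → t < 1 →
    A = t • B + (1 - t) • C → B = A ∨ C = A

/-- The support of a matrix: the set of positions of its nonzero entries. -/
def matSupp (n m : ℕ) (A : Matrix (Fin n) (Fin m) ℝ) : Set (Fin n × Fin m) :=
  {p | A p.1 p.2 ≠ 0}

/-- The size of the support of a matrix. -/
noncomputable def suppCard (n m : ℕ) (A : Matrix (Fin n) (Fin m) ℝ) : ℕ :=
  (matSupp n m A).ncard

/-- A subset `Ω` of positions contains a *cycle* if there are `s ≥ 2`, distinct row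
indices `i₁,…,i_s` and distinct column indices `j₁,…,j_s` such that all the pairs
`(i₁,j₁), (i₂,j₁), (i₂,j₂), (i₃,j₂), …, (i_s,j_s), (i₁,j_s)` belong to `Ω`. -/
def ContainsCycle (n m : ℕ) (Ω : Set (Fin n × Fin m)) : Prop :=
  ∃ s : ℕ, 2 ≤ s ∧ ∃ (i : ZMod s → Fin n) (j : ZMod s → Fin m),
    Function.Injective i ∧ Function.Injective j ∧
    ∀ t : ZMod s, (i t, j t) ∈ Ω ∧ (i (t + 1), j t) ∈ Ω

/-- Two matrices are *equivalent* if one is obtained from the other by a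
permutation of rows and a permutation of columns. -/
def MatEquiv (n m : ℕ) (A B : Matrix (Fin n) (Fin m) ℝ) : Prop :=
  ∃ (σ : Equiv.Perm (Fin n)) (τ : Equiv.Perm (Fin m)), ∀ i j, B i j = A (σ i) (τ j)

lemma cycle_of_seq {n m : ℕ} (Ω : Set (Fin n × Fin m)) (i : ℕ → Fin n) (j : ℕ → Fin m)
    (hai : ∀ t, i (t+1) ≠ i t) (haj : ∀ t, j (t+1) ≠ j t)
    (e1 : ∀ t, (i t, j t) ∈ Ω) (e2 : ∀ t, (i (t+1), j t) ∈ Ω) :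
    ContainsCycle n m Ω := by
  classical
  set Q : ℕ → Prop := fun u =>
    (∃ l k, u = 2*l ∧ k < l ∧ i l = i k) ∨ (∃ l k, u = 2*l+1 ∧ k < l ∧ j l = j k) with hQ
  have hex : ∃ u, Q u := by
    obtain ⟨a, b, hab, h⟩ := Finite.exists_ne_map_eq_of_infinite i
    rcases Ne.lt_or_gt hab with h1 | h1
    · exact ⟨2*b, Or.inl ⟨b, a, rfl, h1, h.symm⟩⟩
    · exact ⟨2*a, Or.inl ⟨a, b, rfl, h1, h⟩⟩
  have hu₀ := Nat.find_spec hex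
  set u₀ := Nat.find hex with hu₀def
  have hmin : ∀ u, u < u₀ → ¬ Q u := fun u hu => Nat.find_min hex hu
  have hrowne : ∀ k l, k < l → 2*l < u₀ → i l ≠ i k := by
    intro k l hkl hlt h
    exact hmin _ hlt (Or.inl ⟨l, k, rfl, hkl, h⟩)
  have hcolne : ∀ k l, k < l → 2*l+1 < u₀ → j l ≠ j k := by
    intro k l hkl hlt h
    exact hmin _ hlt (Or.inr ⟨l, k, rfl, hkl, h⟩)
  rcases hu₀ with ⟨l, k, hu, hkl, hik⟩ | ⟨l, k, hu, hkl, hjk⟩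
  · -- row repetition: i l = i k, first event at u₀ = 2*l
    have iinj : ∀ a b, a < l → b < l → i a = i b → a = b := by
      intro a b ha hb h
      by_contra hne
      rcases Ne.lt_or_gt hne with h1 | h1
      · exact hrowne a b h1 (by omega) h.symm
      · exact hrowne b a h1 (by omega) h
    have jinj : ∀ a b, a < l → b < l → j a = j b → a = b := by
      intro a b ha hb h
      by_contra hne
      rcases Ne.lt_or_gt hne with h1 | h1
      · exact hcolne a b h1 (by omega) h.symm
      · exact hcolne b a h1 (by omega) h
    have hk1 : k + 1 ≠ l := by
      intro h
      apply hai k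
      rw [h]; exact hik
    set s := l - k with hs
    have hs2 : 2 ≤ s := by omega
    haveI : NeZero s := ⟨by omega⟩
    haveI : Fact (1 < s) := ⟨hs2⟩
    refine ⟨s, hs2, fun t => i (k + t.val), fun t => j (k + t.val), ?_, ?_, ?_⟩
    · intro t₁ t₂ h
      have v1 := ZMod.val_lt t₁
      have v2 := ZMod.val_lt t₂
      have := iinj (k + t₁.val) (k + t₂.val) (by omega) (by omega) h
      exact ZMod.val_injective s (by omega)
    · intro t₁ t₂ h
      have v1 := ZMod.val_lt t₁
      have v2 := ZMod.val_lt t₂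
      have := jinj (k + t₁.val) (k + t₂.val) (by omega) (by omega) h
      exact ZMod.val_injective s (by omega)
    · intro t
      refine ⟨e1 _, ?_⟩
      have htv := ZMod.val_lt t
      by_cases hlt : t.val + 1 < s
      · have hv : (t+1).val = t.val + 1 := by
          rw [ZMod.val_add, ZMod.val_one, Nat.mod_eq_of_lt hlt]
        have := e2 (k + t.val)
        simp only [hv, ← Nat.add_assoc]
        exact this
      · have hs1 : t.val + 1 = s := by omega
        have h0 : (t+1).val = 0 := by
          rw [ZMod.val_add, ZMod.val_one, hs1, Nat.mod_self]
        have hl : (k + t.val) + 1 = l := by omega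
        have h2 := e2 (k + t.val)
        rw [hl, hik] at h2
        simpa [h0] using h2
  · -- column repetition: j l = j k, first event at u₀ = 2*l+1
    have iinj : ∀ a b, a < l + 1 → b < l + 1 → i a = i b → a = b := by
      intro a b ha hb h
      by_contra hne
      rcases Ne.lt_or_gt hne with h1 | h1
      · exact hrowne a b h1 (by omega) h.symm
      · exact hrowne b a h1 (by omega) h
    have jinj : ∀ a b, a < l → b < l → j a = j b → a = b := by
      intro a b ha hb h
      by_contra hne
      rcases Ne.lt_or_gt hne with h1 | h1
      · exact hcolne a b h1 (by omega) h.symm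
      · exact hcolne b a h1 (by omega) h
    have hk1 : k + 1 ≠ l := by
      intro h
      apply haj k
      rw [h]; exact hjk
    set s := l - k with hs
    have hs2 : 2 ≤ s := by omega
    haveI : NeZero s := ⟨by omega⟩
    haveI : Fact (1 < s) := ⟨hs2⟩
    refine ⟨s, hs2, fun t => i (k + 1 + t.val), fun t => j (k + 1 + t.val), ?_, ?_, ?_⟩
    · intro t₁ t₂ h
      have v1 := ZMod.val_lt t₁
      have v2 := ZMod.val_lt t₂
      have := iinj (k + 1 + t₁.val) (k + 1 + t₂.val) (by omega) (by omega) h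
      exact ZMod.val_injective s (by omega)
    · intro t₁ t₂ h
      have v1 := ZMod.val_lt t₁
      have v2 := ZMod.val_lt t₂
      -- indices in [k+1, l+1); index l corresponds to j l = j k
      have key : ∀ a, a < s → ∀ b, b < s → j (k+1+a) = j (k+1+b) → a = b := by
        intro a ha b hb hab
        rcases Nat.lt_or_ge (k+1+a) l with h1 | h1
        · rcases Nat.lt_or_ge (k+1+b) l with h2 | h2
          · have := jinj _ _ h1 h2 hab
            omega
          · -- k+1+b = l
            have hbl : k+1+b = l := by omega
            rw [hbl, hjk] at hab
            have := jinj _ _ h1 (by omega) hab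
            omega
        · have hal : k+1+a = l := by omega
          rcases Nat.lt_or_ge (k+1+b) l with h2 | h2
          · rw [hal, hjk] at hab
            have := jinj _ _ (by omega) h2 hab
            omega
          · omega
      have := key t₁.val (ZMod.val_lt t₁) t₂.val (ZMod.val_lt t₂) h
      exact ZMod.val_injective s (by omega)
    · intro t
      refine ⟨e1 _, ?_⟩
      have htv := ZMod.val_lt t
      by_cases hlt : t.val + 1 < s
      · have hv : (t+1).val = t.val + 1 := by
          rw [ZMod.val_add, ZMod.val_one, Nat.mod_eq_of_lt hlt]
        have := e2 (k + 1 + t.val)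
        simp only [hv, ← Nat.add_assoc]
        exact this
      · have hs1 : t.val + 1 = s := by omega
        have h0 : (t+1).val = 0 := by
          rw [ZMod.val_add, ZMod.val_one, hs1, Nat.mod_self]
        have hl : k + 1 + t.val = l := by omega
        have h2 := e2 k
        rw [← hjk, ← hl] at h2
        simpa [h0] using h2

lemma exists_ne_of_sum_zero {α : Type*} [Fintype α] [DecidableEq α] (f : α → ℝ)
    (h : ∑ x, f x = 0) (x₀ : α) (hx : f x₀ ≠ 0) : ∃ x, x ≠ x₀ ∧ f x ≠ 0 := by
  by_contra hc
  push_neg at hc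
  apply hx
  have : ∑ x, f x = f x₀ := Finset.sum_eq_single x₀
    (fun b _ hb => hc b hb) (fun hb => absurd (Finset.mem_univ x₀) hb)
  rw [h] at this
  exact this.symm

lemma cycle_of_nonzero {n m : ℕ} (D : Matrix (Fin n) (Fin m) ℝ) (hD : D ≠ 0)
    (hrow : ∀ a, ∑ b, D a b = 0) (hcol : ∀ b, ∑ a, D a b = 0) :
    ContainsCycle n m (matSupp n m D) := by
  classical
  have hp₀ : ∃ p : Fin n × Fin m, D p.1 p.2 ≠ 0 := by
    by_contra h
    push_neg at h
    exact hD (by ext a b; exact h (a, b))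
  obtain ⟨p₀, hp₀⟩ := hp₀
  have step : ∀ p : Fin n × Fin m, D p.1 p.2 ≠ 0 →
      ∃ q : Fin n × Fin m, D q.1 q.2 ≠ 0 ∧ q.1 ≠ p.1 ∧ q.2 ≠ p.2 ∧ D q.1 p.2 ≠ 0 := by
    intro p hp
    obtain ⟨i', hi', hDi⟩ := exists_ne_of_sum_zero (fun a => D a p.2) (hcol p.2) p.1 hp
    obtain ⟨j', hj', hDj⟩ := exists_ne_of_sum_zero (fun b => D i' b) (hrow i') p.2 hDi
    exact ⟨(i', j'), hDj, hi', hj', hDi⟩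
  let T := {p : Fin n × Fin m // D p.1 p.2 ≠ 0}
  let F : T → T := fun p => ⟨Classical.choose (step p.1 p.2), (Classical.choose_spec (step p.1 p.2)).1⟩
  let seq : ℕ → T := fun k => F^[k] ⟨p₀, hp₀⟩
  have hseq : ∀ k, seq (k+1) = F (seq k) := fun k => Function.iterate_succ_apply' F k _
  have hspec : ∀ k, (seq (k+1)).1.1 ≠ (seq k).1.1 ∧ (seq (k+1)).1.2 ≠ (seq k).1.2 ∧
      D (seq (k+1)).1.1 (seq k).1.2 ≠ 0 := by
    intro k
    have h := Classical.choose_spec (step (seq k).1 (seq k).2)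
    rw [hseq k]
    exact ⟨h.2.1, h.2.2.1, h.2.2.2⟩
  exact cycle_of_seq _ (fun k => (seq k).1.1) (fun k => (seq k).1.2)
    (fun k => (hspec k).1) (fun k => (hspec k).2.1)
    (fun k => (seq k).2) (fun k => (hspec k).2.2)

lemma perturb_of_cycle {n m : ℕ} {A : Matrix (Fin n) (Fin m) ℝ} (hA : IsDSA n m A)
    (hc : ContainsCycle n m (matSupp n m A)) :
    ∃ B C : Matrix (Fin n) (Fin m) ℝ, IsDSA n m B ∧ IsDSA n m C ∧
      A = (1/2 : ℝ) • B + (1 - 1/2 : ℝ) • C ∧ B ≠ A ∧ C ≠ A := by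
  classical
  obtain ⟨s, hs2, i, j, hi, hj, hedge⟩ := hc
  haveI : NeZero s := ⟨by omega⟩
  haveI : Fact (1 < s) := ⟨hs2⟩
  have hone : (1 : ZMod s) ≠ 0 := one_ne_zero
  set D : Matrix (Fin n) (Fin m) ℝ := fun a b =>
    (∑ t : ZMod s, if a = i t ∧ b = j t then (1:ℝ) else 0) -
    (∑ t : ZMod s, if a = i (t+1) ∧ b = j t then (1:ℝ) else 0) with hDdef
  -- pointwise evaluation when b = j t₀
  have evalP : ∀ (r : ZMod s → Fin n) (hr : Function.Injective r) (a : Fin n) (t₀ : ZMod s),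
      (∑ t : ZMod s, if a = r t ∧ j t₀ = j t then (1:ℝ) else 0) = if a = r t₀ then 1 else 0 := by
    intro r hr a t₀
    have : ∀ t : ZMod s, (if a = r t ∧ j t₀ = j t then (1:ℝ) else 0) =
        if t = t₀ then (if a = r t₀ then (1:ℝ) else 0) else 0 := by
      intro t
      by_cases ht : t = t₀
      · subst ht; simp
      · have : j t₀ ≠ j t := fun h => ht (hj h.symm)
        simp [this, ht]
    rw [Finset.sum_congr rfl (fun t _ => this t), Finset.sum_ite_eq' Finset.univ t₀]
    simp
  have evalzero : ∀ (r : ZMod s → Fin n) (a : Fin n) (b : Fin m), (∀ t, b ≠ j t) →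
      (∑ t : ZMod s, if a = r t ∧ b = j t then (1:ℝ) else 0) = 0 := by
    intro r a b hb
    refine Finset.sum_eq_zero fun t _ => ?_
    simp [hb t]
  have hi1 : Function.Injective (fun t : ZMod s => i (t + 1)) := by
    intro t₁ t₂ h
    have := hi h
    exact add_right_cancel this
  have hine : ∀ t₁ t₂ : ZMod s, i t₁ ≠ i (t₂ + 1) ∨ t₁ ≠ t₂ := by
    intro t₁ t₂
    by_cases h : t₁ = t₂
    · subst h
      left
      intro hh
      have := hi hh
      exact hone (by linear_combination -this)
    · exact Or.inr h
  -- key values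
  have hDplus : ∀ t₀ : ZMod s, D (i t₀) (j t₀) = 1 := by
    intro t₀
    rw [hDdef]
    simp only
    rw [evalP i hi (i t₀) t₀, evalP (fun t => i (t+1)) hi1 (i t₀) t₀]
    have h2 : i t₀ ≠ i (t₀ + 1) := by
      rcases hine t₀ t₀ with h | h
      · exact h
      · exact absurd rfl h
    simp [h2]
  have hDminus : ∀ t₀ : ZMod s, D (i (t₀+1)) (j t₀) = -1 := by
    intro t₀
    rw [hDdef]
    simp only
    rw [evalP i hi (i (t₀+1)) t₀, evalP (fun t => i (t+1)) hi1 (i (t₀+1)) t₀]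
    have h2 : i (t₀+1) ≠ i t₀ := by
      rcases hine t₀ t₀ with h | h
      · exact h.symm
      · exact absurd rfl h
    simp [h2]
  -- trichotomy
  have hDcases : ∀ a b, D a b = 0 ∨ (∃ t, a = i t ∧ b = j t ∧ D a b = 1) ∨
      (∃ t, a = i (t+1) ∧ b = j t ∧ D a b = -1) := by
    intro a b
    by_cases hb : ∃ t, b = j t
    · obtain ⟨t₀, hbt⟩ := hb
      subst hbt
      rw [hDdef]
      simp only
      rw [evalP i hi a t₀, evalP (fun t => i (t+1)) hi1 a t₀]
      by_cases h1 : a = i t₀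
      · by_cases h2 : a = i (t₀+1)
        · exfalso
          rcases hine t₀ t₀ with h | h
          · exact h (h1 ▸ h2 ▸ rfl)
          · exact h rfl
        · right; left
          exact ⟨t₀, h1, rfl, by rw [if_pos h1, if_neg h2]; ring⟩
      · by_cases h2 : a = i (t₀+1)
        · right; right
          exact ⟨t₀, h2, rfl, by rw [if_pos h2, if_neg h1]; ring⟩
        · left; rw [if_neg h1, if_neg h2]; ring
    · push_neg at hb
      left
      rw [hDdef]
      simp only
      rw [evalzero i a b hb, evalzero (fun t => i (t+1)) a b hb]
      ring
  -- row and column sums of D vanish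
  have hrowD : ∀ a, ∑ b, D a b = 0 := by
    intro a
    have key : ∀ r : ZMod s → Fin n,
        ∑ b, (∑ t : ZMod s, if a = r t ∧ b = j t then (1:ℝ) else 0) =
        ∑ t : ZMod s, if a = r t then (1:ℝ) else 0 := by
      intro r
      rw [Finset.sum_comm]
      refine Finset.sum_congr rfl fun t _ => ?_
      by_cases h : a = r t
      · simp [h, Finset.sum_ite_eq' Finset.univ (j t)]
      · simp [h]
    simp only [hDdef]
    rw [Finset.sum_sub_distrib, key i, key (fun t => i (t+1))]
    rw [← Equiv.sum_comp (Equiv.addRight (1 : ZMod s)) (fun t => if a = i t then (1:ℝ) else 0)]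
    simp only [Equiv.coe_addRight]
    exact sub_self _
  have hcolD : ∀ b, ∑ a, D a b = 0 := by
    intro b
    have key : ∀ r : ZMod s → Fin n, Function.Injective r →
        ∑ a, (∑ t : ZMod s, if a = r t ∧ b = j t then (1:ℝ) else 0) =
        ∑ t : ZMod s, if b = j t then (1:ℝ) else 0 := by
      intro r hr
      rw [Finset.sum_comm]
      refine Finset.sum_congr rfl fun t _ => ?_
      by_cases h : b = j t
      · simp [h, Finset.sum_ite_eq' Finset.univ (r t)]
      · simp [h]
    simp only [hDdef]
    rw [Finset.sum_sub_distrib, key i hi, key (fun t => i (t+1)) hi1]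
    ring
  -- epsilon
  have hne : (Finset.univ : Finset (ZMod s)).Nonempty := Finset.univ_nonempty
  set ε : ℝ := Finset.univ.inf' hne (fun t => min (A (i t) (j t)) (A (i (t+1)) (j t))) with hεdef
  have hεpos : 0 < ε := by
    rw [hεdef, Finset.lt_inf'_iff]
    intro t _
    have h1 := (hedge t).1
    have h2 := (hedge t).2
    simp only [matSupp, Set.mem_setOf_eq] at h1 h2
    exact lt_min (lt_of_le_of_ne (hA.1 _ _) (Ne.symm h1)) (lt_of_le_of_ne (hA.1 _ _) (Ne.symm h2))
  have hεle1 : ∀ t, ε ≤ A (i t) (j t) := fun t =>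
    le_trans (Finset.inf'_le _ (Finset.mem_univ t)) (min_le_left _ _)
  have hεle2 : ∀ t, ε ≤ A (i (t+1)) (j t) := fun t =>
    le_trans (Finset.inf'_le _ (Finset.mem_univ t)) (min_le_right _ _)
  -- B and C
  set B : Matrix (Fin n) (Fin m) ℝ := fun a b => A a b + ε * D a b with hBdef
  set C : Matrix (Fin n) (Fin m) ℝ := fun a b => A a b - ε * D a b with hCdef
  have hnonneg : ∀ a b, 0 ≤ B a b ∧ 0 ≤ C a b := by
    intro a b
    rcases hDcases a b with h | ⟨t, ha, hb, h⟩ | ⟨t, ha, hb, h⟩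
    · simp [hBdef, hCdef, h, hA.1 a b]
    · subst ha; subst hb
      have := hεle1 t
      constructor
      · simp only [hBdef, h]
        nlinarith [hA.1 (i t) (j t)]
      · simp only [hCdef, h]
        nlinarith
    · subst ha; subst hb
      have := hεle2 t
      constructor
      · simp only [hBdef, h]
        nlinarith
      · simp only [hCdef, h]
        nlinarith [hA.1 (i (t+1)) (j t)]
  have hBD : IsDSA n m B := by
    refine ⟨fun a b => (hnonneg a b).1, fun b => ?_, fun a => ?_⟩
    · simp only [hBdef]
      rw [Finset.sum_add_distrib, hA.2.1 b, ← Finset.mul_sum, hcolD b, mul_zero, add_zero]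
    · simp only [hBdef]
      rw [Finset.sum_add_distrib, hA.2.2 a, ← Finset.mul_sum, hrowD a, mul_zero, add_zero]
  have hCD : IsDSA n m C := by
    refine ⟨fun a b => (hnonneg a b).2, fun b => ?_, fun a => ?_⟩
    · simp only [hCdef]
      rw [Finset.sum_sub_distrib, hA.2.1 b, ← Finset.mul_sum, hcolD b, mul_zero, sub_zero]
    · simp only [hCdef]
      rw [Finset.sum_sub_distrib, hA.2.2 a, ← Finset.mul_sum, hrowD a, mul_zero, sub_zero]
  refine ⟨B, C, hBD, hCD, ?_, ?_, ?_⟩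
  · ext a b
    simp only [Matrix.add_apply, Matrix.smul_apply, hBdef, hCdef, Pi.smul_apply, smul_eq_mul]
    show A a b = (1/2:ℝ) * (A a b + ε * D a b) + (1 - 1/2:ℝ) * (A a b - ε * D a b)
    ring
  · intro h
    have := congrFun (congrFun h (i 0)) (j 0)
    simp only [hBdef, hDplus 0] at this
    nlinarith
  · intro h
    have := congrFun (congrFun h (i 0)) (j 0)
    simp only [hCdef, hDplus 0] at this
    nlinarith

lemma ContainsCycle.mono {n m : ℕ} {Ω Ω' : Set (Fin n × Fin m)} (h : Ω ⊆ Ω')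
    (hc : ContainsCycle n m Ω) : ContainsCycle n m Ω' := by
  obtain ⟨s, hs, i, j, hi, hj, he⟩ := hc
  exact ⟨s, hs, i, j, hi, hj, fun t => ⟨h (he t).1, h (he t).2⟩⟩

/-- A doubly stochastic array is extremal if and only if its
support contains no cycle. -/
theorem extremal_iff_no_cycle (n m : ℕ)
    (A : Matrix (Fin n) (Fin m) ℝ) (hA : IsDSA n m A) :
    IsExtremal n m A ↔ ¬ ContainsCycle n m (matSupp n m A) := by
  constructor
  · intro hext hcyc
    obtain ⟨B, C, hB, hC, heq, hBne, hCne⟩ := perturb_of_cycle hA hcyc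
    rcases hext.2 B C (1/2) hB hC (by norm_num) (by norm_num) heq with h | h
    · exact hBne h
    · exact hCne h
  · intro hnc
    refine ⟨hA, fun B C t hB hC ht0 ht1 hABC => ?_⟩
    by_contra hcon
    push_neg at hcon
    obtain ⟨hBA, hCA⟩ := hcon
    have hBC : B ≠ C := by
      intro h
      apply hBA
      subst h
      rw [hABC]
      ext a b
      simp only [Matrix.add_apply, Matrix.smul_apply, smul_eq_mul]
      ring
    set D : Matrix (Fin n) (Fin m) ℝ := B - C with hDdef
    have hDne : D ≠ 0 := sub_ne_zero.mpr hBC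
    have hrowD : ∀ a, ∑ b, D a b = 0 := by
      intro a
      simp only [hDdef, Matrix.sub_apply]
      rw [Finset.sum_sub_distrib, hB.2.2 a, hC.2.2 a, sub_self]
    have hcolD : ∀ b, ∑ a, D a b = 0 := by
      intro b
      simp only [hDdef, Matrix.sub_apply]
      rw [Finset.sum_sub_distrib, hB.2.1 b, hC.2.1 b, sub_self]
    have hcyc := cycle_of_nonzero D hDne hrowD hcolD
    have hsub : matSupp n m D ⊆ matSupp n m A := by
      intro p hp
      simp only [matSupp, Set.mem_setOf_eq] at hp ⊢
      intro hA0
      apply hp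
      have h0 := congrFun (congrFun hABC p.1) p.2
      rw [hA0] at h0
      simp only [Matrix.add_apply, Matrix.smul_apply, smul_eq_mul] at h0
      have hB0 : B p.1 p.2 = 0 := by
        nlinarith [hB.1 p.1 p.2, hC.1 p.1 p.2]
      have hC0 : C p.1 p.2 = 0 := by
        nlinarith [hB.1 p.1 p.2, hC.1 p.1 p.2]
      simp [hDdef, Matrix.sub_apply, hB0, hC0]
    exact hnc (ContainsCycle.mono hsub hcyc)
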